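/- arXiv:2002.09597 — 5 statements merged into one kernel-verified Lean document; each statement's English description precedes it below -/
import Mathlib

section
/- Subdividing an edge of a graph does not decrease its pathwidth: if G' is obtained from G by replacing an edge (u,w) with a path u–x–w through a new vertex x, then pw(G') ≥ pw(G). -/
/-!
Contract the subdivision vertex `x` back into `u`: replacing `x` by `u` in every bag of an
optimal path decomposition of `G'` keeps the bag sizes from growing. The bags containing `u` or `x`
still form an interval, because the edge `u – x` puts both vertices in a common bag, and the removed
edge `u – w` is covered by the bag that covered `x – w`.
-/

/-- A path decomposition of a graph: a sequence of bags covering all vertices,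
with every edge inside some bag, and each vertex's bags forming a contiguous
subsequence. -/
def IsPathDecomp {V : Type*} (G : SimpleGraph V) {n : ℕ} (B : Fin n → Finset V) : Prop :=
  (∀ v, ∃ i, v ∈ B i) ∧
  (∀ ⦃u v⦄, G.Adj u v → ∃ i, u ∈ B i ∧ v ∈ B i) ∧
  (∀ v : V, ∀ i j k : Fin n, i ≤ j → j ≤ k → v ∈ B i → v ∈ B k → v ∈ B j)

/-- The pathwidth of a graph: the minimum, over path decompositions, of the
maximum bag size minus one. -/
noncomputable def pathwidth {V : Type*} (G : SimpleGraph V) : ℕ :=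
  sInf {w | ∃ (n : ℕ) (B : Fin n → Finset V), IsPathDecomp G B ∧ ∀ i, (B i).card ≤ w + 1}

theorem Set.OrdConnected.union_of_nonempty_inter {α : Type*} [LinearOrder α] {s t : Set α}
    (hs : s.OrdConnected) (ht : t.OrdConnected) (hst : (s ∩ t).Nonempty) :
    (s ∪ t).OrdConnected := by
  obtain ⟨c, hcs, hct⟩ := hst
  have key : ∀ {s t : Set α}, s.OrdConnected → t.OrdConnected → c ∈ s → c ∈ t →
      ∀ x ∈ s, ∀ y ∈ t, Set.Icc x y ⊆ s ∪ t := by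
    intro s t hs ht hcs hct x hx y hy z hz
    rcases le_total z c with hzc | hcz
    · exact Or.inl (hs.out hx hcs ⟨hz.1, hzc⟩)
    · exact Or.inr (ht.out hct hy ⟨hcz, hz.2⟩)
  refine ⟨?_⟩
  rintro x (hx | hx) y (hy | hy)
  · exact hs.out hx hy |>.trans Set.subset_union_left
  · exact key hs ht hcs hct x hx y hy
  · exact Set.union_comm s t ▸ key ht hs hct hcs x hx y hy
  · exact ht.out hx hy |>.trans Set.subset_union_right

section PathDecomp

variable {V W : Type*} {n : ℕ}

theorem IsPathDecomp.ordConnected {G : SimpleGraph V} {B : Fin n → Finset V}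
    (hB : IsPathDecomp G B) (v : V) : {i | v ∈ B i}.OrdConnected :=
  ⟨fun i hi k hk j hj => hB.2.2 v i j k hj.1 hj.2 hi hk⟩

theorem IsPathDecomp.image [DecidableEq V] {G : SimpleGraph V} {H : SimpleGraph W}
    {B : Fin n → Finset W} (hB : IsPathDecomp H B) {f : W → V} (hf : Function.Surjective f)
    (hlift : ∀ ⦃a b⦄, G.Adj a b → ∃ a' b', H.Adj a' b' ∧ f a' = a ∧ f b' = b)
    (hfiber : ∀ v, {i | ∃ a ∈ B i, f a = v}.OrdConnected) :
    IsPathDecomp G (fun i => (B i).image f) := by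
  obtain ⟨hcover, hedge, -⟩ := hB
  refine ⟨fun v => ?_, fun a b hab => ?_, fun v i j k hij hjk hi hk => ?_⟩
  · obtain ⟨a, rfl⟩ := hf v
    obtain ⟨i, hi⟩ := hcover a
    exact ⟨i, Finset.mem_image_of_mem f hi⟩
  · obtain ⟨a', b', hab', rfl, rfl⟩ := hlift hab
    obtain ⟨i, ha, hb⟩ := hedge hab'
    exact ⟨i, Finset.mem_image_of_mem f ha, Finset.mem_image_of_mem f hb⟩
  · simp only [Finset.mem_image] at hi hk ⊢
    exact (hfiber v).out hi hk ⟨hij, hjk⟩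

theorem IsPathDecomp.ordConnected_getD {H : SimpleGraph (Option V)}
    {B : Fin n → Finset (Option V)} (hB : IsPathDecomp H B) {u : V} (hu : H.Adj none (some u))
    (v : V) : {i | ∃ a ∈ B i, a.getD u = v}.OrdConnected := by
  have hsplit : {i | ∃ a ∈ B i, a.getD u = v} =
      {i | some v ∈ B i} ∪ {i | v = u ∧ none ∈ B i} := by
    ext i
    simp only [Set.mem_ofPred_eq, Set.mem_union, Option.exists, Option.getD_none,
      Option.getD_some]
    grind
  rw [hsplit]
  by_cases hvu : v = u
  · subst hvu
    simp only [true_and]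
    obtain ⟨i, hi⟩ := hB.2.1 hu
    exact (hB.ordConnected _).union_of_nonempty_inter (hB.ordConnected _) ⟨i, hi.2, hi.1⟩
  · simpa [hvu] using hB.ordConnected (some v)

theorem pathwidth_le_of_isPathDecomp {G : SimpleGraph V} {B : Fin n → Finset V}
    (hB : IsPathDecomp G B) {k : ℕ} (hk : ∀ i, (B i).card ≤ k + 1) : pathwidth G ≤ k :=
  Nat.sInf_le ⟨n, B, hB, hk⟩

theorem exists_isPathDecomp_card_le_pathwidth [Fintype V] (G : SimpleGraph V) :
    ∃ (n : ℕ) (B : Fin n → Finset V), IsPathDecomp G B ∧ ∀ i, (B i).card ≤ pathwidth G + 1 := by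
  have hne : {k | ∃ (n : ℕ) (B : Fin n → Finset V), IsPathDecomp G B ∧
      ∀ i, (B i).card ≤ k + 1}.Nonempty := by
    refine ⟨Fintype.card V, 1, fun _ => Finset.univ, ⟨?_, ?_, ?_⟩, fun _ => ?_⟩
    · exact fun v => ⟨0, Finset.mem_univ v⟩
    · exact fun a b _ => ⟨0, Finset.mem_univ a, Finset.mem_univ b⟩
    · exact fun v _ j _ _ _ _ _ => Finset.mem_univ v
    · exact Finset.card_univ.trans_le (Nat.le_succ _)
  exact Nat.sInf_mem hne

theorem pathwidth_le_of_contract_none [Fintype V] {G : SimpleGraph V}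
    {H : SimpleGraph (Option V)} {u : V} (hu : H.Adj none (some u))
    (hlift : ∀ ⦃a b⦄, G.Adj a b → ∃ a' b', H.Adj a' b' ∧ a'.getD u = a ∧ b'.getD u = b) :
    pathwidth G ≤ pathwidth H := by
  classical
  obtain ⟨n, B, hB, hcard⟩ := exists_isPathDecomp_card_le_pathwidth H
  have hB' := hB.image (fun v => ⟨some v, rfl⟩) hlift (hB.ordConnected_getD hu)
  exact pathwidth_le_of_isPathDecomp hB' fun i => Finset.card_image_le.trans (hcard i)

end PathDecomp

theorem stmt1_general {V : Type*} [Fintype V]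
    (G : SimpleGraph V) (u w : V)
    (G' : SimpleGraph (Option V))
    (hG' : ∀ a b : Option V, G'.Adj a b ↔
      ((∃ a' b', a = some a' ∧ b = some b' ∧ G.Adj a' b' ∧
          ¬(a' = u ∧ b' = w) ∧ ¬(a' = w ∧ b' = u))
        ∨ (a = none ∧ (b = some u ∨ b = some w))
        ∨ (b = none ∧ (a = some u ∨ a = some w)))) :
    pathwidth G ≤ pathwidth G' := by
  refine pathwidth_le_of_contract_none (u := u) ((hG' _ _).2 (by simp)) fun a b hab => ?_
  by_cases hsub : (a = u ∧ b = w) ∨ (a = w ∧ b = u)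
  · rcases hsub with ⟨rfl, rfl⟩ | ⟨rfl, rfl⟩
    · exact ⟨none, some b, (hG' _ _).2 (by simp), rfl, rfl⟩
    · exact ⟨some a, none, (hG' _ _).2 (by simp), rfl, rfl⟩
  · rw [not_or] at hsub
    exact ⟨some a, some b, (hG' _ _).2 (Or.inl ⟨a, b, rfl, rfl, hab, hsub⟩), rfl, rfl⟩

/-- Subdividing an edge does not decrease pathwidth: if `G'` is obtained from `G`
by replacing the edge `(u,w)` with a path `u – x – w` through a new vertex `x`
(modelled as `none : Option V`), then `pw(G') ≥ pw(G)`. -/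
theorem stmt1 {V : Type*} [Fintype V]
    (G : SimpleGraph V) (u w : V) (huw : G.Adj u w)
    (G' : SimpleGraph (Option V))
    (hG' : ∀ a b : Option V, G'.Adj a b ↔
      ((∃ a' b', a = some a' ∧ b = some b' ∧ G.Adj a' b' ∧
          ¬(a' = u ∧ b' = w) ∧ ¬(a' = w ∧ b' = u))
        ∨ (a = none ∧ (b = some u ∨ b = some w))
        ∨ (b = none ∧ (a = some u ∨ a = some w)))) :
    pathwidth G ≤ pathwidth G' :=
  stmt1_general G u w G' hG'
end

section
/- For every i ≥ 0, the complete ternary tree T_i of height i (a root with three children, each the root of a copy of T_{i−1}; T_0 is a single vertex) has pathwidth at least i. -/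
/-- The complete ternary tree of height `i`: vertices are words over `Fin 3` of
length at most `i` (the root is the empty word), and a vertex is adjacent to the
words obtained by prepending one letter (its children). -/
def ternaryTree (i : ℕ) : SimpleGraph {l : List (Fin 3) // l.length ≤ i} :=
  SimpleGraph.fromRel (fun a b => ∃ d : Fin 3, b.1 = d :: a.1)

/-!
Induct on the height. Given a path decomposition of `T (i+1)`, restrict it to the three
subtrees `T i` below the root; each restriction has a bag of size at least `i + 1`, at
positions `j₀ ≤ j₁ ≤ j₂` say. The contiguity condition makes bag `j₁` a separator between
bags `j₀` and `j₂`, so it meets the path between the two outer subtrees through the root.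
That path avoids the middle subtree, so bag `j₁` holds `i + 1` vertices of the middle
subtree and a vertex outside it.
-/

open SimpleGraph Finset

section PathDecomp

variable {V W : Type*} {G : SimpleGraph V} {H : SimpleGraph W} {n : ℕ}

lemma isPathDecomp_const_univ [Fintype V] : IsPathDecomp G fun _ : Fin 1 => (univ : Finset V) :=
  ⟨fun v => ⟨0, mem_univ v⟩, fun u v _ => ⟨0, mem_univ u, mem_univ v⟩,
    fun v _ _ _ _ _ _ _ => mem_univ v⟩

lemma le_pathwidth [Finite V] {w : ℕ}
    (h : ∀ (n : ℕ) (B : Fin n → Finset V), IsPathDecomp G B → ∃ j, w + 1 ≤ (B j).card) :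
    w ≤ pathwidth G := by
  have := Fintype.ofFinite V
  refine le_csInf ⟨Fintype.card V, 1, _, isPathDecomp_const_univ, fun _ => by simp⟩ ?_
  rintro k ⟨n, B, hB, hcard⟩
  obtain ⟨j, hj⟩ := h n B hB
  exact Nat.le_of_succ_le_succ (hj.trans (hcard j))

lemma IsPathDecomp.exists_mem_support {B : Fin n → Finset V} (hB : IsPathDecomp G B)
    {u w : V} (p : G.Walk u w) {j₀ j₁ j₂ : Fin n} (hu : u ∈ B j₀) (hw : w ∈ B j₂)
    (h₀₁ : j₀ ≤ j₁) (h₁₂ : j₁ ≤ j₂) : ∃ x ∈ p.support, x ∈ B j₁ := by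
  induction p generalizing j₀ with
  | nil => exact ⟨_, by simp, hB.2.2 _ _ _ _ h₀₁ h₁₂ hu hw⟩
  | @cons a b c hab p ih =>
    obtain ⟨t, hat, hbt⟩ := hB.2.1 hab
    by_cases ht : t ≤ j₁
    · obtain ⟨x, hx, hxB⟩ := ih hbt hw ht
      exact ⟨x, by simp [hx], hxB⟩
    · exact ⟨a, by simp, hB.2.2 a _ _ _ h₀₁ (le_of_not_ge ht) hu hat⟩

lemma IsPathDecomp.comap {B : Fin n → Finset W} (hB : IsPathDecomp H B) (f : G →g H)
    (hf : Function.Injective f) : IsPathDecomp G fun j => (B j).preimage f hf.injOn := by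
  refine ⟨fun v => ?_, fun u v huv => ?_, fun v j₀ j₁ j₂ h₀₁ h₁₂ h₀ h₂ => ?_⟩
  · obtain ⟨j, hj⟩ := hB.1 (f v)
    exact ⟨j, mem_preimage.mpr hj⟩
  · obtain ⟨j, hu, hv⟩ := hB.2.1 (f.map_adj huv)
    exact ⟨j, mem_preimage.mpr hu, mem_preimage.mpr hv⟩
  · simp only [mem_preimage] at h₀ h₂ ⊢
    exact hB.2.2 (f v) j₀ j₁ j₂ h₀₁ h₁₂ h₀ h₂

end PathDecomp

lemma Finset.card_preimage_lt {α β : Type*} {s : Finset β} {f : α → β} (hf : Set.InjOn f (f ⁻¹' s))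
    {x : β} (hx : x ∈ s) (hxf : x ∉ Set.range f) : (s.preimage f hf).card < s.card := by
  classical
  rw [card_preimage]
  exact card_lt_card (filter_ssubset.mpr ⟨x, hx, hxf⟩)

lemma Fin.exists_le_le_of_three {α : Type*} [LinearOrder α] (f : Fin 3 → α) :
    ∃ a b c : Fin 3, a ≠ c ∧ b ≠ c ∧ f a ≤ f c ∧ f c ≤ f b := by
  rcases le_total (f 0) (f 1) with h01 | h10 <;> rcases le_total (f 1) (f 2) with h12 | h21 <;>
    rcases le_total (f 0) (f 2) with h02 | h20
  exacts [⟨0, 2, 1, by decide, by decide, h01, h12⟩, ⟨0, 2, 1, by decide, by decide, h01, h12⟩,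
    ⟨0, 1, 2, by decide, by decide, h02, h21⟩, ⟨2, 1, 0, by decide, by decide, h20, h01⟩,
    ⟨1, 2, 0, by decide, by decide, h10, h02⟩, ⟨1, 0, 2, by decide, by decide, h12, h20⟩,
    ⟨1, 2, 0, by decide, by decide, h10, h02⟩, ⟨2, 0, 1, by decide, by decide, h21, h10⟩]

namespace ternaryTree

variable {i : ℕ}

lemma adj_cons {a b : {l : List (Fin 3) // l.length ≤ i}} (d : Fin 3) (h : b.1 = d :: a.1) :
    (ternaryTree i).Adj a b := by
  refine (fromRel_adj _ a b).mpr ⟨fun hab => ?_, Or.inl ⟨d, h⟩⟩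
  subst hab
  simpa using congrArg List.length h

def walkToRoot (i : ℕ) :
    (l : List (Fin 3)) → (h : l.length ≤ i) → (ternaryTree i).Walk ⟨l, h⟩ ⟨[], i.zero_le⟩
  | [], _ => Walk.nil
  | d :: l, h => Walk.cons (adj_cons (a := ⟨l, (l.length.le_succ).trans h⟩) d rfl).symm
      (walkToRoot i l ((l.length.le_succ).trans h))

lemma suffix_of_mem_support_walkToRoot {x : {l : List (Fin 3) // l.length ≤ i}} :
    ∀ (l : List (Fin 3)) (h : l.length ≤ i), x ∈ (walkToRoot i l h).support → x.1 <:+ l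
  | [], _, hx => by
    obtain rfl : x = _ := by simpa [walkToRoot] using hx
    exact List.nil_suffix
  | d :: l, h, hx => by
    simp only [walkToRoot, Walk.support_cons, List.mem_cons] at hx
    rcases hx with rfl | hx
    · exact List.suffix_refl _
    · exact (suffix_of_mem_support_walkToRoot l _ hx).trans (List.suffix_cons d l)

-- The letter nearest the root is the last one of a word.
def subtreeHom (c : Fin 3) : ternaryTree i →g ternaryTree (i + 1) where
  toFun v := ⟨v.1 ++ [c], by simpa using v.2⟩
  map_rel' {u v} huv := by
    rw [ternaryTree, fromRel_adj] at huv ⊢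
    refine ⟨fun h => huv.1 (Subtype.ext (by simpa using h)), ?_⟩
    rcases huv.2 with ⟨d, hd⟩ | ⟨d, hd⟩
    exacts [Or.inl ⟨d, by simp [hd]⟩, Or.inr ⟨d, by simp [hd]⟩]

lemma subtreeHom_injective (c : Fin 3) : Function.Injective (subtreeHom (i := i) c) :=
  fun _ _ h => Subtype.ext (List.append_left_injective [c] (congrArg Subtype.val h))

lemma eq_of_suffix_subtreeHom {c e : Fin 3} {u v : {l : List (Fin 3) // l.length ≤ i}}
    (h : (subtreeHom c u).1 <:+ (subtreeHom e v).1) : c = e := by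
  have : [c] <:+ v.1 ++ [e] := (List.suffix_append u.1 [c]).trans h
  simpa [eq_comm] using List.singleton_suffix_iff_getLast?_eq_some.mp this

lemma exists_le_card_bag_succ
    (ih : ∀ (n : ℕ) (B : Fin n → Finset {l : List (Fin 3) // l.length ≤ i}),
      IsPathDecomp (ternaryTree i) B → ∃ j, i + 1 ≤ (B j).card)
    {n : ℕ} {B : Fin n → Finset {l : List (Fin 3) // l.length ≤ i + 1}}
    (hB : IsPathDecomp (ternaryTree (i + 1)) B) : ∃ j, i + 2 ≤ (B j).card := by
  let Bc (c : Fin 3) (j : Fin n) := (B j).preimage (subtreeHom c) (subtreeHom_injective c).injOn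
  choose j hj using fun c => ih n (Bc c) (hB.comap _ (subtreeHom_injective c))
  obtain ⟨a, b, c, hac, hbc, hab, hcb⟩ := Fin.exists_le_le_of_three j
  obtain ⟨u, hu⟩ := card_pos.mp (i.succ_pos.trans_le (hj a))
  obtain ⟨w, hw⟩ := card_pos.mp (i.succ_pos.trans_le (hj b))
  let U := subtreeHom a u
  let W := subtreeHom b w
  obtain ⟨x, hx, hxB⟩ := hB.exists_mem_support
    ((walkToRoot _ U.1 U.2).append (walkToRoot _ W.1 W.2).reverse)
    (mem_preimage.mp hu) (mem_preimage.mp hw) hab hcb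
  have hx_suffix : x.1 <:+ U.1 ∨ x.1 <:+ W.1 := by
    rw [Walk.mem_support_append_iff, Walk.support_reverse, List.mem_reverse] at hx
    exact hx.imp (suffix_of_mem_support_walkToRoot _ _) (suffix_of_mem_support_walkToRoot _ _)
  have hx_range : x ∉ Set.range (subtreeHom c) := by
    rintro ⟨z, rfl⟩
    exact hx_suffix.elim (fun h => hac (eq_of_suffix_subtreeHom h).symm)
      (fun h => hbc (eq_of_suffix_subtreeHom h).symm)
  exact ⟨j c, (hj c).trans_lt (card_preimage_lt _ hxB hx_range)⟩

lemma exists_le_card_bag :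
    ∀ (i n : ℕ) (B : Fin n → Finset {l : List (Fin 3) // l.length ≤ i}),
      IsPathDecomp (ternaryTree i) B → ∃ j, i + 1 ≤ (B j).card
  | 0, _, _, hB => by
    obtain ⟨j, hj⟩ := hB.1 ⟨[], le_rfl⟩
    exact ⟨j, card_pos.mpr ⟨_, hj⟩⟩
  | i + 1, _, _, hB => exists_le_card_bag_succ (exists_le_card_bag i) hB

end ternaryTree

/-- The complete ternary tree of height `i` has pathwidth at least `i`. -/
theorem stmt2 (i : ℕ) : i ≤ pathwidth (ternaryTree i) :=
  have : Finite {l : List (Fin 3) // l.length ≤ i} := (List.finite_length_le (Fin 3) i).to_subtype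
  le_pathwidth (ternaryTree.exists_le_card_bag i)
end

section
/- In a proper h-layer drawing of a graph G (vertices on h horizontal lines, each edge connecting consecutive layers), if Γ is planar (crossing-free), then G has pathwidth at most h − 1. -/
open Finset

section

variable {V : Type*}

lemma Finset.exists_chain_of_exists_insert [Fintype V] [DecidableEq V] {p : Finset V → Prop}
    (h0 : p ∅) (hext : ∀ P, p P → P ≠ univ → ∃ v ∉ P, p (insert v P)) :
    ∃ F : ℕ → Finset V, Monotone F ∧ F 0 = ∅ ∧ F (Fintype.card V) = univ ∧
      (∀ t, #(F (t + 1) \ F t) ≤ 1) ∧ ∀ t, p (F t) := by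
  cases isEmpty_or_nonempty V
  · exact ⟨fun _ => ∅, monotone_const, rfl, eq_univ_of_forall isEmptyElim, by simp, fun _ => h0⟩
  choose! next hnext using hext
  let F : ℕ → Finset V := fun t => (fun P => insert (next P) P)^[t] ∅
  have F_succ : ∀ t, F (t + 1) = insert (next (F t)) (F t) := fun t =>
    Function.iterate_succ_apply' _ _ _
  have hp : ∀ t, p (F t) := by
    intro t
    induction t with
    | zero => exact h0
    | succ t ih =>
      by_cases hu : F t = univ
      · rwa [F_succ, hu, insert_eq_of_mem (mem_univ _), ← hu]
      · rw [F_succ]; exact (hnext _ ih hu).2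
  have hcard : ∀ t, F t = univ ∨ t ≤ #(F t) := by
    intro t
    induction t with
    | zero => exact Or.inr (Nat.zero_le _)
    | succ t ih =>
      by_cases hu : F t = univ
      · rw [F_succ, hu, insert_eq_of_mem (mem_univ _)]; exact Or.inl rfl
      · rw [F_succ, card_insert_of_notMem (hnext _ (hp t) hu).1]
        exact Or.inr (by have := ih.resolve_left hu; omega)
  refine ⟨F, monotone_nat_of_le_succ fun t => F_succ t ▸ subset_insert _ _, rfl, ?_,
    fun t => ?_, hp⟩
  · exact (hcard _).elim id fun h => eq_univ_of_card _ (le_antisymm (card_le_univ _) h)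
  · rw [F_succ, card_sdiff_of_subset (subset_insert _ _)]
    have := card_insert_le (next (F t)) (F t)
    omega

lemma Nat.exists_lt_not_and_succ {p : ℕ → Prop} {n : ℕ} (hp : Monotone p) (h0 : ¬ p 0)
    (hn : p n) : ∃ t < n, ¬ p t ∧ p (t + 1) := by
  obtain ⟨t, ht, ht'⟩ := Nat.exists_not_and_succ_of_not_zero_of_exists h0 ⟨n, hn⟩
  exact ⟨t, lt_of_not_ge fun hnt => ht (hp hnt hn), ht, ht'⟩

namespace SimpleGraph

variable (G : SimpleGraph V)

open Classical in
noncomputable def innerBoundary (P : Finset V) : Finset V :=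
  {u ∈ P | ∃ w, G.Adj u w ∧ w ∉ P}

variable {G}

lemma mem_innerBoundary {P : Finset V} {u : V} :
    u ∈ G.innerBoundary P ↔ u ∈ P ∧ ∃ w, G.Adj u w ∧ w ∉ P := by
  classical
  simp [innerBoundary]

/-- Pathwidth is at most the vertex separation number `k` of the vertex ordering whose initial
segments are the sets `F t`. -/
theorem pathwidth_le_of_chain [DecidableEq V] {F : ℕ → Finset V} {n k : ℕ} (hF : Monotone F)
    (h0 : F 0 = ∅) (hn : ∀ v, v ∈ F n) (hstep : ∀ t, #(F (t + 1) \ F t) ≤ 1)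
    (hk : ∀ t, #(G.innerBoundary (F t)) ≤ k) : pathwidth G ≤ k := by
  let B : Fin n → Finset V := fun t => (F (t + 1) \ F t) ∪ G.innerBoundary (F t)
  have mem_B : ∀ v (t : Fin n),
      v ∈ B t ↔ v ∈ F (t + 1) ∧ (v ∉ F t ∨ ∃ w, G.Adj v w ∧ w ∉ F t) := by
    intro v t
    have := @hF t (t + 1) (by omega)
    simp only [B, mem_union, mem_sdiff, mem_innerBoundary]
    grind
  have hB : IsPathDecomp G B := by
    refine ⟨fun v => ?_, fun u v huv => ?_, fun v i j k hij hjk hi hk => ?_⟩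
    · obtain ⟨t, ht, hvt, hvt'⟩ := Nat.exists_lt_not_and_succ (p := (v ∈ F ·))
        (fun _ _ hab => @hF _ _ hab v) (by simp [h0]) (hn v)
      exact ⟨⟨t, ht⟩, (mem_B v _).2 ⟨hvt', Or.inl hvt⟩⟩
    · obtain ⟨t, ht, hnot, hboth⟩ := Nat.exists_lt_not_and_succ
        (p := fun t => u ∈ F t ∧ v ∈ F t) (fun _ _ hab => And.imp (@hF _ _ hab u) (@hF _ _ hab v))
        (by simp [h0]) ⟨hn u, hn v⟩
      refine ⟨⟨t, ht⟩, (mem_B u _).2 ⟨hboth.1, ?_⟩, (mem_B v _).2 ⟨hboth.2, ?_⟩⟩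
      · by_cases hu : u ∈ F t
        exacts [Or.inr ⟨v, huv, fun hv => hnot ⟨hu, hv⟩⟩, Or.inl hu]
      · by_cases hv : v ∈ F t
        exacts [Or.inr ⟨u, huv.symm, fun hu => hnot ⟨hu, hv⟩⟩, Or.inl hv]
    · rw [mem_B] at hi hk ⊢
      refine ⟨hF (by simp only [Fin.le_def] at hij; omega) hi.1, ?_⟩
      by_cases hvj : v ∈ F j
      · have hjk' : F j ⊆ F k := hF hjk
        obtain ⟨w, hvw, hwk⟩ := hk.2.resolve_left fun hvk => hvk (hjk' hvj)
        exact Or.inr ⟨w, hvw, fun hwj => hwk (hjk' hwj)⟩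
      · exact Or.inl hvj
  refine Nat.sInf_le ⟨n, B, hB, fun t => (card_union_le _ _).trans ?_⟩
  have := hstep t
  have := hk t
  omega

end SimpleGraph

structure IsPlanarProperDrawing (G : SimpleGraph V) (ℓ : V → ℕ) (pos : V → ℝ) : Prop where
  adj : ∀ ⦃u v⦄, G.Adj u v → ℓ u = ℓ v + 1 ∨ ℓ v = ℓ u + 1
  injOn_layer : ∀ u v, ℓ u = ℓ v → pos u = pos v → u = v
  planar : ∀ a b c d, G.Adj a b → G.Adj c d → ℓ b = ℓ a + 1 → ℓ d = ℓ c + 1 → ℓ a = ℓ c →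
    ¬((pos a < pos c ∧ pos d < pos b) ∨ (pos c < pos a ∧ pos b < pos d))

/-- `P` is the set of vertices swept so far: it is an initial segment of every layer, and all
edges leaving `P` in the same gap between consecutive layers (the gap of `ab` being indexed by
`min (ℓ a) (ℓ b)`) start at the same vertex. -/
structure IsSweep (G : SimpleGraph V) (ℓ : V → ℕ) (pos : V → ℝ) (P : Finset V) : Prop where
  left_closed : ∀ ⦃u y⦄, ℓ u = ℓ y → pos u < pos y → y ∈ P → u ∈ P
  eq_of_leaving : ∀ ⦃a b a' b'⦄, G.Adj a b → a ∈ P → b ∉ P → G.Adj a' b' → a' ∈ P → b' ∉ P →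
    min (ℓ a) (ℓ b) = min (ℓ a') (ℓ b') → a = a'

def IsLeftmostOutside (ℓ : V → ℕ) (pos : V → ℝ) (P : Finset V) (v : V) : Prop :=
  v ∉ P ∧ ∀ y ∉ P, ℓ y = ℓ v → pos v ≤ pos y

/-- Sweeping `v` would make `vw` an edge leaving `P` in the same gap as the leaving edge `ux`,
which stays leaving. -/
def IsBlocked (G : SimpleGraph V) (ℓ : V → ℕ) (P : Finset V) (v w : V) : Prop :=
  G.Adj v w ∧ w ∉ P ∧
    ∃ u x, G.Adj u x ∧ u ∈ P ∧ x ∉ P ∧ x ≠ v ∧ min (ℓ u) (ℓ x) = min (ℓ v) (ℓ w)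

variable {G : SimpleGraph V} {ℓ : V → ℕ} {pos : V → ℝ} {P : Finset V}

lemma exists_isLeftmostOutside [Finite V] {z : V} (hz : z ∉ P) :
    ∃ v, IsLeftmostOutside ℓ pos P v ∧ ℓ v = ℓ z := by
  obtain ⟨v, ⟨hvP, hvz⟩, hmin⟩ := Set.exists_min_image {y | y ∉ P ∧ ℓ y = ℓ z} pos
    (Set.toFinite _) ⟨z, hz, rfl⟩
  exact ⟨v, ⟨hvP, fun y hy hyv => hmin y ⟨hy, hyv.trans hvz⟩⟩, hvz⟩

namespace IsSweep

lemma empty : IsSweep G ℓ pos ∅ :=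
  ⟨fun _ _ _ _ hy => absurd hy (notMem_empty _), fun _ _ _ _ _ ha => absurd ha (notMem_empty _)⟩

lemma insert [DecidableEq V] (hP : IsSweep G ℓ pos P) {v : V}
    (hv : IsLeftmostOutside ℓ pos P v) (hfree : ∀ w, ¬ IsBlocked G ℓ P v w) :
    IsSweep G ℓ pos (insert v P) := by
  constructor
  · intro u y hl hlt hy
    rcases mem_insert.1 hy with rfl | hyP
    · by_contra hu
      exact (hv.2 u (fun huP => hu (mem_insert_of_mem huP)) hl).not_gt hlt
    · exact mem_insert_of_mem (hP.left_closed hl hlt hyP)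
  · intro a b a' b' hab ha hb ha'b' ha' hb' hgap
    simp only [mem_insert, not_or] at ha ha' hb hb'
    rcases ha with rfl | ha <;> rcases ha' with rfl | ha'
    · rfl
    · exact (hfree b ⟨hab, hb.2, a', b', ha'b', ha', hb'.2, hb'.1, hgap.symm⟩).elim
    · exact (hfree b' ⟨ha'b', hb'.2, a, b, hab, ha, hb.2, hb.1, hgap⟩).elim
    · exact hP.eq_of_leaving hab ha hb.2 ha'b' ha' hb'.2 hgap

lemma card_innerBoundary_le (hP : IsSweep G ℓ pos P)
    (hadj : ∀ ⦃u v⦄, G.Adj u v → ℓ u = ℓ v + 1 ∨ ℓ v = ℓ u + 1) {h : ℕ}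
    (hrange : ∀ v, 1 ≤ ℓ v ∧ ℓ v ≤ h) : #(G.innerBoundary P) ≤ h - 1 := by
  have hleave : ∀ u ∈ G.innerBoundary P, ∃ w, G.Adj u w ∧ w ∉ P :=
    fun u hu => (SimpleGraph.mem_innerBoundary.1 hu).2
  choose! w hw using hleave
  calc #(G.innerBoundary P) ≤ #(Icc 1 (h - 1)) := by
        refine card_le_card_of_injOn (fun u => min (ℓ u) (ℓ (w u))) (fun u hu => ?_)
          (fun u hu u' hu' hgap => ?_)
        · have := hrange u
          have := hrange (w u)
          have := hadj (hw u hu).1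
          simp only [coe_Icc, Set.mem_Icc]
          omega
        · exact hP.eq_of_leaving (hw u hu).1 (SimpleGraph.mem_innerBoundary.1 hu).1 (hw u hu).2
            (hw u' hu').1 (SimpleGraph.mem_innerBoundary.1 hu').1 (hw u' hu').2 hgap
    _ = h - 1 := by simp

end IsSweep

namespace IsPlanarProperDrawing

variable (D : IsPlanarProperDrawing G ℓ pos)
include D

lemma not_cross {a b c d : V} (hab : G.Adj a b) (hcd : G.Adj c d) (hac : ℓ a = ℓ c)
    (hbd : ℓ b = ℓ d) (hlt : pos a < pos c) (hgt : pos d < pos b) : False := by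
  rcases D.adj hab with h | h
  · exact D.planar b a d c hab.symm hcd.symm h (by omega) hbd (Or.inr ⟨hgt, hlt⟩)
  · exact D.planar a b c d hab hcd h (by omega) hac (Or.inl ⟨hlt, hgt⟩)

lemma pos_lt_of_mem_of_notMem (hP : IsSweep G ℓ pos P) {u w : V} (hu : u ∈ P) (hw : w ∉ P)
    (hl : ℓ u = ℓ w) : pos u < pos w := by
  rcases lt_trichotomy (pos u) (pos w) with hlt | heq | hgt
  · exact hlt
  · exact absurd (D.injOn_layer u w hl heq ▸ hu) hw
  · exact absurd (hP.left_closed hl.symm hgt hu) hw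

lemma pos_lt_of_isLeftmostOutside {v x : V} (hv : IsLeftmostOutside ℓ pos P v) (hx : x ∉ P)
    (hl : ℓ x = ℓ v) (hne : x ≠ v) : pos v < pos x :=
  (hv.2 x hx hl).lt_of_ne fun heq => hne (D.injOn_layer x v hl heq.symm)

lemma exists_leaving_of_isBlocked (hP : IsSweep G ℓ pos P) {v w : V}
    (hv : IsLeftmostOutside ℓ pos P v) (hb : IsBlocked G ℓ P v w) :
    ∃ u x, G.Adj u x ∧ u ∈ P ∧ x ∉ P ∧ min (ℓ u) (ℓ x) = min (ℓ v) (ℓ w) ∧ ℓ u = ℓ v := by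
  obtain ⟨hvw, hw, u, x, hux, hu, hx, hxv, hgap⟩ := hb
  refine ⟨u, x, hux, hu, hx, hgap, by_contra fun hne => ?_⟩
  have := D.adj hux
  have := D.adj hvw
  have hxl : ℓ x = ℓ v := by omega
  have hul : ℓ u = ℓ w := by omega
  -- `x` lies right of the leftmost unswept `v` and `u` left of the unswept `w`: `ux` crosses `vw`
  exact D.not_cross hvw hux.symm hxl.symm hul.symm
    (D.pos_lt_of_isLeftmostOutside hv hx hxl hxv) (D.pos_lt_of_mem_of_notMem hP hu hw hul)

lemma not_isBlocked_below_of_isBlocked_above (hP : IsSweep G ℓ pos P) {v w v' w' : V}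
    (hv : IsLeftmostOutside ℓ pos P v) (hb : IsBlocked G ℓ P v w) (hw : ℓ w = ℓ v + 1)
    (hv' : IsLeftmostOutside ℓ pos P v') (hl : ℓ v' = ℓ w) (hw' : ℓ w' < ℓ v') :
    ¬ IsBlocked G ℓ P v' w' := by
  intro hb'
  obtain ⟨u, x, hux, hu, hx, hgap, hlu⟩ := D.exists_leaving_of_isBlocked hP hv hb
  obtain ⟨u', x', hux', hu', hx', hgap', hlu'⟩ := D.exists_leaving_of_isBlocked hP hv' hb'
  have := D.adj hb'.1
  obtain rfl := hP.eq_of_leaving hux hu hx hux' hu' hx' (by omega)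
  omega

/-- Among the leftmost unswept vertices not blocked downwards, a highest one can be swept. -/
lemma exists_insert_isSweep [Fintype V] [DecidableEq V] (hP : IsSweep G ℓ pos P)
    (hne : P ≠ univ) : ∃ v ∉ P, IsSweep G ℓ pos (insert v P) := by
  classical
  let C := univ.filter fun v =>
    IsLeftmostOutside ℓ pos P v ∧ ∀ w, ℓ w < ℓ v → ¬ IsBlocked G ℓ P v w
  have hC : C.Nonempty := by
    obtain ⟨z, hz, hmin⟩ := exists_min_image (univ \ P) ℓ (sdiff_nonempty.2 fun h =>
      hne (eq_univ_of_forall fun v => h (mem_univ v)))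
    obtain ⟨v, hv, hvz⟩ := exists_isLeftmostOutside (pos := pos) (mem_sdiff.1 hz).2
    refine ⟨v, mem_filter.2 ⟨mem_univ v, hv, fun w hw hb => ?_⟩⟩
    have := hmin w (mem_sdiff.2 ⟨mem_univ w, hb.2.1⟩)
    omega
  obtain ⟨v, hvC, hmax⟩ := C.exists_max_image ℓ hC
  obtain ⟨-, hv, hbelow⟩ := mem_filter.1 hvC
  refine ⟨v, hv.1, hP.insert hv fun w hb => ?_⟩
  rcases D.adj hb.1 with hw | hw
  · exact hbelow w (by omega) hb
  obtain ⟨v', hv', hl⟩ := exists_isLeftmostOutside (pos := pos) hb.2.1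
  have := hmax v' (mem_filter.2 ⟨mem_univ v', hv', fun w' hw' =>
    D.not_isBlocked_below_of_isBlocked_above hP hv hb hw hv' hl hw'⟩)
  omega

end IsPlanarProperDrawing

end

/-- A planar (crossing-free) proper `h`-layer drawing, given combinatorially by a
layer assignment `ℓ : V → {1,…,h}` with `|ℓ u - ℓ v| = 1` on edges and positions
within layers such that no two edges cross, forces `pw(G) ≤ h - 1`. -/
theorem stmt4 {V : Type*} [Fintype V] [Nonempty V] (G : SimpleGraph V) (h : ℕ)
    (ℓ : V → ℕ) (pos : V → ℝ)
    (hrange : ∀ v, 1 ≤ ℓ v ∧ ℓ v ≤ h)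
    (hproper : ∀ ⦃u v⦄, G.Adj u v → ℓ u = ℓ v + 1 ∨ ℓ v = ℓ u + 1)
    (hinj : ∀ u v, ℓ u = ℓ v → pos u = pos v → u = v)
    (hplanar : ∀ a b c d, G.Adj a b → G.Adj c d →
      ℓ b = ℓ a + 1 → ℓ d = ℓ c + 1 → ℓ a = ℓ c →
      ¬((pos a < pos c ∧ pos d < pos b) ∨ (pos c < pos a ∧ pos b < pos d))) :
    pathwidth G + 1 ≤ h := by
  classical
  have D : IsPlanarProperDrawing G ℓ pos := ⟨hproper, hinj, hplanar⟩
  obtain ⟨F, hmono, h0, huniv, hstep, hsweep⟩ :=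
    exists_chain_of_exists_insert IsSweep.empty fun P hP hne => D.exists_insert_isSweep hP hne
  have hpw : pathwidth G ≤ h - 1 :=
    G.pathwidth_le_of_chain hmono h0 (fun v => huniv ▸ mem_univ v) hstep
      fun t => (hsweep t).card_innerBoundary_le hproper hrange
  obtain ⟨v⟩ := ‹Nonempty V›
  have := hrange v
  omega
end

section
/- Let T be a tree and T' the tree obtained from T by deleting all leaves. If T' is a subgraph of a stegosaurus without stumps, then every vertex of T' has degree at most 4 in T'. -/
/-!
A vertex that is a pole (a vertex `p j` or `q j`) of no block lies in at most two blocks, and all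
its neighbours are poles of these blocks, so it has at most four neighbours.
A pole `v` of block `j` is a pole of no other block. Its neighbours lie in the large side `S j`,
plus at most one more vertex: if `v` also lies in a neighbouring block, it does so through an
edge gluing, and one of the two poles of that block is already in `S j`.
Each neighbouring block shares at most one vertex with `S j`. Any other vertex of `S j` is
adjacent only to `p j` and `q j`, so if it is not a leaf of the tree it is adjacent to both of
them. Two such vertices would close a 4-cycle. Hence at most three vertices of `S j` remain after
the leaves are deleted.
-/

open SimpleGraph

theorem Set.Subsingleton.ncard_le_one {α : Type*} {s : Set α} (hs : s.Subsingleton) :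
    s.ncard ≤ 1 :=
  have := hs.finite.to_subtype
  Set.ncard_le_one_iff_subsingleton.mpr hs

namespace SimpleGraph

theorem IsAcyclic.subsingleton_commonNeighbors {V : Type*} {G : SimpleGraph V}
    (hG : G.IsAcyclic) {a b : V} (hab : a ≠ b) : (G.commonNeighbors a b).Subsingleton := by
  have isPath {w : V} (ha : G.Adj a w) (hb : G.Adj w b) :
      (Walk.cons ha (Walk.cons hb Walk.nil)).IsPath := by
    simp [Walk.isPath_def, ha.ne, hb.ne, hab]
  rintro w₁ ⟨ha₁, hb₁⟩ w₂ ⟨ha₂, hb₂⟩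
  have := (hG.subsingleton_path a b).elim ⟨_, isPath ha₁ hb₁.symm⟩ ⟨_, isPath ha₂ hb₂.symm⟩
  have h : [a, w₁, b] = [a, w₂, b] := congrArg (fun P : G.Path a b => P.1.support) this
  simpa using h

def Subgraph.nonLeafVerts {V : Type*} {G : SimpleGraph V} (T : G.Subgraph) : Set V :=
  {v ∈ T.verts | 2 ≤ (T.neighborSet v).ncard}

theorem Subgraph.subsingleton_nonLeafVerts_neighborSet_subset_pair {V : Type*}
    {G : SimpleGraph V} {T : G.Subgraph} (hT : T.coe.IsAcyclic) {a b : V} (hab : a ≠ b) :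
    {w ∈ T.nonLeafVerts | T.neighborSet w ⊆ {a, b}}.Subsingleton := by
  have adj_pair {w : V} (hw : w ∈ T.nonLeafVerts) (hsub : T.neighborSet w ⊆ {a, b}) :
      T.Adj a w ∧ T.Adj b w := by
    have heq := Set.eq_of_subset_of_ncard_le hsub (by rw [Set.ncard_pair hab]; exact hw.2)
    exact ⟨(heq.symm ▸ Set.mem_insert a {b} : a ∈ T.neighborSet w).symm,
      (heq.symm ▸ Set.mem_insert_of_mem a rfl : b ∈ T.neighborSet w).symm⟩
  rintro w₁ ⟨hw₁, hsub₁⟩ w₂ ⟨hw₂, hsub₂⟩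
  obtain ⟨ha₁, hb₁⟩ := adj_pair hw₁ hsub₁
  obtain ⟨ha₂, hb₂⟩ := adj_pair hw₂ hsub₂
  have := hT.subsingleton_commonNeighbors (a := ⟨a, ha₁.fst_mem⟩) (b := ⟨b, hb₁.fst_mem⟩)
    (by simpa using hab)
  exact congrArg Subtype.val (this (x := ⟨w₁, hw₁.1⟩) ⟨ha₁, hb₁⟩ (y := ⟨w₂, hw₂.1⟩) ⟨ha₂, hb₂⟩)

end SimpleGraph

/-- The chain of blocks `K_{2,|S j|}`, with poles `p j`, `q j`, that makes up a stegosaurus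
without stumps. -/
structure IsBlockChain {V : Type*} [DecidableEq V] (G : SimpleGraph V) {m : ℕ}
    (p q : Fin m → V) (S blk : Fin m → Finset V) : Prop where
  blk_eq : ∀ j, blk j = insert (p j) (insert (q j) (S j))
  p_ne_q : ∀ j, p j ≠ q j
  p_notMem : ∀ j, p j ∉ S j
  q_notMem : ∀ j, q j ∉ S j
  adj_iff : ∀ u v, G.Adj u v ↔ ∃ j,
    ((u = p j ∨ u = q j) ∧ v ∈ S j) ∨ ((v = p j ∨ v = q j) ∧ u ∈ S j)
  disjoint : ∀ i j : Fin m, (i : ℕ) + 2 ≤ j → Disjoint (blk i) (blk j)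
  glue : ∀ i j : Fin m, (i : ℕ) + 1 = j →
    (q i ∈ S j ∧ p j ∈ S i ∧ blk i ∩ blk j = {q i, p j}) ∨
      ∃ x ∈ S i, x ∈ S j ∧ blk i ∩ blk j = {x}

namespace IsBlockChain

variable {V : Type*} [DecidableEq V] {G : SimpleGraph V} {m : ℕ} {p q : Fin m → V}
  {S blk : Fin m → Finset V} {i j k : Fin m} {v w x y : V}

theorem mem_blk (h : IsBlockChain G p q S blk) : x ∈ blk j ↔ x = p j ∨ x = q j ∨ x ∈ S j := by
  simp [h.blk_eq]

theorem notMem_of_pole (h : IsBlockChain G p q S blk) (hx : x = p j ∨ x = q j) : x ∉ S j := by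
  rcases hx with rfl | rfl
  exacts [h.p_notMem j, h.q_notMem j]

theorem consecutive_of_mem_blk (h : IsBlockChain G p q S blk) (hi : x ∈ blk i)
    (hj : x ∈ blk j) (hij : i ≠ j) : (i : ℕ) + 1 = j ∨ (j : ℕ) + 1 = i := by
  by_contra! hfar
  rcases Nat.lt_or_gt_of_ne (Fin.val_ne_of_ne hij) with hlt | hlt
  · exact Finset.disjoint_left.mp (h.disjoint i j (by omega)) hi hj
  · exact Finset.disjoint_left.mp (h.disjoint j i (by omega)) hj hi

theorem eq_or_eq_or_eq_of_mem_blk (h : IsBlockChain G p q S blk) (hi : x ∈ blk i)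
    (hj : x ∈ blk j) (hk : x ∈ blk k) : i = j ∨ i = k ∨ j = k := by
  by_contra! hne
  have := h.consecutive_of_mem_blk hi hj hne.1
  have := h.consecutive_of_mem_blk hi hk hne.2.1
  have := h.consecutive_of_mem_blk hj hk hne.2.2
  omega

theorem inter_cases (h : IsBlockChain G p q S blk) (hi : x ∈ blk i) (hj : x ∈ blk j)
    (hij : i ≠ j) :
    (∃ a b, (a = p i ∨ a = q i) ∧ a ∈ S j ∧ (b = p j ∨ b = q j) ∧ b ∈ S i ∧
      blk i ∩ blk j = {a, b}) ∨ ∃ y ∈ S i, y ∈ S j ∧ blk i ∩ blk j = {y} := by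
  rcases h.consecutive_of_mem_blk hi hj hij with hc | hc
  · rcases h.glue i j hc with ⟨hq, hp, hint⟩ | hvert
    · exact Or.inl ⟨q i, p j, Or.inr rfl, hq, Or.inl rfl, hp, hint⟩
    · exact Or.inr hvert
  · rcases h.glue j i hc with ⟨hq, hp, hint⟩ | ⟨y, hyj, hyi, hint⟩
    · refine Or.inl ⟨p i, q j, Or.inl rfl, hp, Or.inr rfl, hq, ?_⟩
      rw [Finset.inter_comm, hint, Finset.pair_comm]
    · exact Or.inr ⟨y, hyi, hyj, by rw [Finset.inter_comm, hint]⟩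

theorem eq_of_mem_large_of_mem_blk (h : IsBlockChain G p q S blk) (hij : i ≠ j)
    (hx : x ∈ S j) (hxi : x ∈ blk i) (hy : y ∈ S j) (hyi : y ∈ blk i) : x = y := by
  have hx' : x ∈ blk i ∩ blk j := Finset.mem_inter.mpr ⟨hxi, h.mem_blk.mpr (by simp [hx])⟩
  have hy' : y ∈ blk i ∩ blk j := Finset.mem_inter.mpr ⟨hyi, h.mem_blk.mpr (by simp [hy])⟩
  rcases h.inter_cases hxi (Finset.mem_inter.mp hx').2 hij with
    ⟨a, b, -, -, hb, -, hint⟩ | ⟨z, -, -, hint⟩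
  · have hbS := h.notMem_of_pole hb
    rw [hint, Finset.mem_insert, Finset.mem_singleton] at hx' hy'
    grind
  · rw [hint, Finset.mem_singleton] at hx' hy'
    rw [hx', hy']

theorem mem_large_of_pole_of_mem_blk (h : IsBlockChain G p q S blk) (hv : v = p j ∨ v = q j)
    (hvi : v ∈ blk i) (hij : i ≠ j) : v ∈ S i ∧ ∃ a, (a = p i ∨ a = q i) ∧ a ∈ S j := by
  have hvj : v ∈ blk j := h.mem_blk.mpr (by tauto)
  have hvS := h.notMem_of_pole hv
  have hv' : v ∈ blk i ∩ blk j := Finset.mem_inter.mpr ⟨hvi, hvj⟩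
  rcases h.inter_cases hvi hvj hij with ⟨a, b, ha, haS, -, hbS, hint⟩ | ⟨y, -, hyS, hint⟩
  · rw [hint, Finset.mem_insert, Finset.mem_singleton] at hv'
    rcases hv' with rfl | rfl
    exacts [absurd haS hvS, ⟨hbS, a, ha, haS⟩]
  · rw [hint, Finset.mem_singleton] at hv'
    exact absurd (hv' ▸ hyS) hvS

theorem eq_of_pole_of_pole (h : IsBlockChain G p q S blk) (hi : v = p i ∨ v = q i)
    (hj : v = p j ∨ v = q j) : i = j := by
  by_contra hij
  exact h.notMem_of_pole hi (h.mem_large_of_pole_of_mem_blk hj (h.mem_blk.mpr (by tauto)) hij).1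

end IsBlockChain

namespace IsBlockChain

variable {V : Type*} [DecidableEq V] {G : SimpleGraph V} {m : ℕ} {p q : Fin m → V}
  {S blk : Fin m → Finset V} {j : Fin m} {v w : V}

theorem adj_of_pole (h : IsBlockChain G p q S blk) (hv : v = p j ∨ v = q j) (hvw : G.Adj v w) :
    w ∈ S j ∨ ∃ k ≠ j, v ∈ S k ∧ (w = p k ∨ w = q k) := by
  obtain ⟨k, ⟨hvk, hwS⟩ | ⟨hwk, hvS⟩⟩ := (h.adj_iff v w).mp hvw
  · exact Or.inl (h.eq_of_pole_of_pole hvk hv ▸ hwS)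
  · refine Or.inr ⟨k, ?_, hvS, hwk⟩
    rintro rfl
    exact h.notMem_of_pole hv hvS

theorem exists_neighborSet_subset_insert_large (h : IsBlockChain G p q S blk)
    (hv : v = p j ∨ v = q j) : ∃ c, G.neighborSet v ⊆ insert c (S j : Set V) := by
  by_cases hk : ∃ k ≠ j, v ∈ blk k
  · obtain ⟨k, hkj, hvk⟩ := hk
    obtain ⟨-, a, ha, haS⟩ := h.mem_large_of_pole_of_mem_blk hv hvk hkj
    -- one pole of `k` lies in `S j`, so only the other one is new
    obtain ⟨c, hc⟩ : ∃ c, ∀ w, (w = p k ∨ w = q k) → w ∈ insert c (S j : Set V) := by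
      rcases ha with rfl | rfl
      · exact ⟨q k, by rintro w (rfl | rfl) <;> simp [haS]⟩
      · exact ⟨p k, by rintro w (rfl | rfl) <;> simp [haS]⟩
    refine ⟨c, fun w hw => ?_⟩
    rcases h.adj_of_pole hv hw with hwS | ⟨l, hlj, hvl, hwl⟩
    · exact Or.inr hwS
    · have hvj : v ∈ blk j := h.mem_blk.mpr (by tauto)
      have hvl' : v ∈ blk l := h.mem_blk.mpr (by tauto)
      obtain rfl : k = l := by
        have := h.eq_or_eq_or_eq_of_mem_blk hvj hvk hvl'
        tauto
      exact hc w hwl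
  · push Not at hk
    refine ⟨v, fun w hw => ?_⟩
    rcases h.adj_of_pole hv hw with hwS | ⟨l, hlj, hvl, -⟩
    · exact Or.inr hwS
    · exact absurd (h.mem_blk.mpr (by tauto)) (hk l hlj)

theorem card_filter_mem_blk_le_two (h : IsBlockChain G p q S blk) (v : V) :
    (Finset.univ.filter fun l => v ∈ blk l).card ≤ 2 := by
  by_contra! h3
  obtain ⟨a, ha, b, hb, c, hc, hab, hac, hbc⟩ := Finset.two_lt_card.mp h3
  simp only [Finset.mem_filter, Finset.mem_univ, true_and] at ha hb hc
  have := h.eq_or_eq_or_eq_of_mem_blk ha hb hc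
  tauto

theorem exists_neighborSet_subset_card_le_four (h : IsBlockChain G p q S blk)
    (hv : ∀ j, ¬(v = p j ∨ v = q j)) :
    ∃ F : Finset V, F.card ≤ 4 ∧ G.neighborSet v ⊆ F := by
  set B := Finset.univ.filter fun l => v ∈ blk l
  refine ⟨B.biUnion fun l => {p l, q l}, ?_, fun w hw => ?_⟩
  · calc (B.biUnion fun l => {p l, q l}).card ≤ ∑ l ∈ B, ({p l, q l} : Finset V).card :=
          Finset.card_biUnion_le
      _ ≤ ∑ _l ∈ B, 2 := Finset.sum_le_sum fun l _ => Finset.card_le_two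
      _ ≤ 4 := by rw [Finset.sum_const, smul_eq_mul]; linarith [h.card_filter_mem_blk_le_two v]
  · obtain ⟨k, ⟨hvk, -⟩ | ⟨hwk, hvS⟩⟩ := (h.adj_iff v w).mp hw
    · exact absurd hvk (hv k)
    · have hvk : v ∈ blk k := h.mem_blk.mpr (by tauto)
      simp only [Finset.coe_biUnion, Set.mem_iUnion]
      exact ⟨k, by simpa [B] using hvk, by simpa using hwk⟩

theorem neighborSet_subset_of_private (h : IsBlockChain G p q S blk) (hw : w ∈ S j)
    (hpriv : ∀ i, w ∈ blk i → i = j) : G.neighborSet w ⊆ {p j, q j} := by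
  intro u hu
  obtain ⟨k, ⟨hwk, -⟩ | ⟨huk, hwS⟩⟩ := (h.adj_iff w u).mp hu
  · obtain rfl := hpriv k (h.mem_blk.mpr (by tauto))
    exact absurd hw (h.notMem_of_pole hwk)
  · obtain rfl := hpriv k (h.mem_blk.mpr (by tauto))
    exact huk

end IsBlockChain

namespace IsBlockChain

variable {V : Type*} [DecidableEq V] {G : SimpleGraph V} {m : ℕ} {p q : Fin m → V}
  {S blk : Fin m → Finset V}

theorem ncard_large_inter_nonLeafVerts_le_three (h : IsBlockChain G p q S blk)
    {T : G.Subgraph} (hT : T.coe.IsAcyclic) (j : Fin m) :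
    (↑(S j) ∩ T.nonLeafVerts).ncard ≤ 3 := by
  set P := {w ∈ T.nonLeafVerts | T.neighborSet w ⊆ {p j, q j}}
  set L := {w | w ∈ S j ∧ ∃ i : Fin m, (i : ℕ) + 1 = j ∧ w ∈ blk i}
  set R := {w | w ∈ S j ∧ ∃ i : Fin m, (j : ℕ) + 1 = i ∧ w ∈ blk i}
  have hsub : ↑(S j) ∩ T.nonLeafVerts ⊆ P ∪ L ∪ R := by
    rintro w ⟨hwS, hwT⟩
    by_cases hpriv : ∀ i, w ∈ blk i → i = j
    · exact Or.inl (Or.inl ⟨hwT, fun u hu =>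
        h.neighborSet_subset_of_private hwS hpriv (T.adj_sub hu)⟩)
    · push Not at hpriv
      obtain ⟨i, hwi, hij⟩ := hpriv
      rcases h.consecutive_of_mem_blk hwi (h.mem_blk.mpr (by tauto)) hij with hc | hc
      exacts [Or.inl (Or.inr ⟨hwS, i, hc, hwi⟩), Or.inr ⟨hwS, i, hc, hwi⟩]
  have hP : P.Subsingleton :=
    T.subsingleton_nonLeafVerts_neighborSet_subset_pair hT (h.p_ne_q j)
  have hL : L.Subsingleton := by
    rintro x ⟨hxS, i, hi, hxi⟩ y ⟨hyS, i', hi', hyi⟩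
    obtain rfl : i = i' := Fin.ext (by omega)
    exact h.eq_of_mem_large_of_mem_blk (Fin.ne_of_val_ne (by omega)) hxS hxi hyS hyi
  have hR : R.Subsingleton := by
    rintro x ⟨hxS, i, hi, hxi⟩ y ⟨hyS, i', hi', hyi⟩
    obtain rfl : i = i' := Fin.ext (by omega)
    exact h.eq_of_mem_large_of_mem_blk (Fin.ne_of_val_ne (by omega)) hxS hxi hyS hyi
  calc (↑(S j) ∩ T.nonLeafVerts).ncard
      ≤ (P ∪ L ∪ R).ncard := Set.ncard_le_ncard hsub (hP.finite.union hL.finite |>.union hR.finite)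
    _ ≤ P.ncard + L.ncard + R.ncard :=
        (Set.ncard_union_le _ _).trans (by linarith [Set.ncard_union_le P L])
    _ ≤ 3 := by linarith [hP.ncard_le_one, hL.ncard_le_one, hR.ncard_le_one]

theorem ncard_neighborSet_le_four (h : IsBlockChain G p q S blk) {T : G.Subgraph}
    (hT : T.coe.IsAcyclic) {H : G.Subgraph} (hH : H.verts ⊆ T.nonLeafVerts) (v : V) :
    (H.neighborSet v).ncard ≤ 4 := by
  have hN : H.neighborSet v ⊆ G.neighborSet v ∩ T.nonLeafVerts :=
    fun w hw => ⟨H.adj_sub hw, hH hw.snd_mem⟩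
  by_cases hv : ∃ j, v = p j ∨ v = q j
  · obtain ⟨j, hj⟩ := hv
    obtain ⟨c, hc⟩ := h.exists_neighborSet_subset_insert_large hj
    have hsub : H.neighborSet v ⊆ insert c (↑(S j) ∩ T.nonLeafVerts) := fun w hw =>
      (hc (hN hw).1).imp id fun hwS => ⟨hwS, (hN hw).2⟩
    calc (H.neighborSet v).ncard
        ≤ (insert c (↑(S j) ∩ T.nonLeafVerts)).ncard :=
          Set.ncard_le_ncard hsub (((S j).finite_toSet.inter_of_left _).insert c)
      _ ≤ (↑(S j) ∩ T.nonLeafVerts).ncard + 1 := Set.ncard_insert_le _ _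
      _ ≤ 4 := by linarith [h.ncard_large_inter_nonLeafVerts_le_three hT j]
  · obtain ⟨F, hF, hsub⟩ := h.exists_neighborSet_subset_card_le_four fun j hj => hv ⟨j, hj⟩
    calc (H.neighborSet v).ncard ≤ (F : Set V).ncard :=
          Set.ncard_le_ncard (hN.trans (Set.inter_subset_left.trans hsub))
      _ ≤ 4 := by rwa [Set.ncard_coe_finset]

end IsBlockChain

theorem stmt13_general {V : Type*} [DecidableEq V] (G : SimpleGraph V)
    (m : ℕ) (p q : Fin m → V) (S : Fin m → Finset V)
    (blk : Fin m → Finset V)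
    (hblk : ∀ j, blk j = insert (p j) (insert (q j) (S j)))
    (hK : ∀ j, p j ≠ q j ∧ p j ∉ S j ∧ q j ∉ S j ∧ 2 ≤ (S j).card)
    (hadj : ∀ u v, G.Adj u v ↔ ∃ j,
      ((u = p j ∨ u = q j) ∧ v ∈ S j) ∨ ((v = p j ∨ v = q j) ∧ u ∈ S j))
    (hfar : ∀ i j : Fin m, (i : ℕ) + 2 ≤ (j : ℕ) → blk i ∩ blk j = ∅)
    (hglue : ∀ (j : ℕ) (hj : j + 1 < m),
      (q ⟨j, Nat.lt_of_succ_lt hj⟩ ∈ S ⟨j + 1, hj⟩ ∧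
        p ⟨j + 1, hj⟩ ∈ S ⟨j, Nat.lt_of_succ_lt hj⟩ ∧
        blk ⟨j, Nat.lt_of_succ_lt hj⟩ ∩ blk ⟨j + 1, hj⟩ =
          {q ⟨j, Nat.lt_of_succ_lt hj⟩, p ⟨j + 1, hj⟩})
      ∨ (∃ x, x ∈ S ⟨j, Nat.lt_of_succ_lt hj⟩ ∧ x ∈ S ⟨j + 1, hj⟩ ∧
          blk ⟨j, Nat.lt_of_succ_lt hj⟩ ∩ blk ⟨j + 1, hj⟩ = {x}))
    (T : G.Subgraph) (hTree : T.coe.IsTree)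
    (T' : G.Subgraph)
    (hT'verts : T'.verts = {v ∈ T.verts | 2 ≤ (T.neighborSet v).ncard}) :
    ∀ v ∈ T'.verts, (T'.neighborSet v).ncard ≤ 4 := by
  have hchain : IsBlockChain G p q S blk :=
    { blk_eq := hblk
      p_ne_q := fun j => (hK j).1
      p_notMem := fun j => (hK j).2.1
      q_notMem := fun j => (hK j).2.2.1
      adj_iff := hadj
      disjoint := fun i j hij => Finset.disjoint_iff_inter_eq_empty.mpr (hfar i j hij)
      glue := by
        rintro ⟨i, hi⟩ ⟨j, hj⟩ (rfl : i + 1 = j)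
        exact hglue i hj }
  exact fun v _ => hchain.ncard_neighborSet_le_four hTree.isAcyclic hT'verts.le v

/-- Let `G` be a stegosaurus without stumps: a chain of complete bipartite
blocks `K_{2,h_j}` (`j < m`), the `j`-th having 2-side `{p j, q j}` and large
side `S j` with `h_j = |S j| ≥ 2`, where all edges of `G` are the block edges,
consecutive blocks are glued either along an edge (inside a snake) or at a
single mergeable large-side vertex (where two snakes merge), and non-consecutive
blocks are disjoint. If `T` is a tree subgraph of `G` and `T'` is obtained from
`T` by deleting all its leaves, then every vertex of `T'` has degree at most 4
in `T'`. -/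
theorem stmt13 {V : Type*} [Fintype V] [DecidableEq V] (G : SimpleGraph V)
    (m : ℕ) (p q : Fin m → V) (S : Fin m → Finset V)
    (blk : Fin m → Finset V)
    (hblk : ∀ j, blk j = insert (p j) (insert (q j) (S j)))
    (hK : ∀ j, p j ≠ q j ∧ p j ∉ S j ∧ q j ∉ S j ∧ 2 ≤ (S j).card)
    (hadj : ∀ u v, G.Adj u v ↔ ∃ j,
      ((u = p j ∨ u = q j) ∧ v ∈ S j) ∨ ((v = p j ∨ v = q j) ∧ u ∈ S j))
    (hfar : ∀ i j : Fin m, (i : ℕ) + 2 ≤ (j : ℕ) → blk i ∩ blk j = ∅)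
    (hglue : ∀ (j : ℕ) (hj : j + 1 < m),
      (q ⟨j, Nat.lt_of_succ_lt hj⟩ ∈ S ⟨j + 1, hj⟩ ∧
        p ⟨j + 1, hj⟩ ∈ S ⟨j, Nat.lt_of_succ_lt hj⟩ ∧
        blk ⟨j, Nat.lt_of_succ_lt hj⟩ ∩ blk ⟨j + 1, hj⟩ =
          {q ⟨j, Nat.lt_of_succ_lt hj⟩, p ⟨j + 1, hj⟩})
      ∨ (∃ x, x ∈ S ⟨j, Nat.lt_of_succ_lt hj⟩ ∧ x ∈ S ⟨j + 1, hj⟩ ∧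
          blk ⟨j, Nat.lt_of_succ_lt hj⟩ ∩ blk ⟨j + 1, hj⟩ = {x}))
    (T : G.Subgraph) (hTree : T.coe.IsTree)
    (T' : G.Subgraph)
    (hT'verts : T'.verts = {v ∈ T.verts | 2 ≤ (T.neighborSet v).ncard})
    (hT'adj : ∀ a b, T'.Adj a b ↔ T.Adj a b ∧ a ∈ T'.verts ∧ b ∈ T'.verts) :
    ∀ v ∈ T'.verts, (T'.neighborSet v).ncard ≤ 4 :=
  stmt13_general G m p q S blk hblk hK hadj hfar hglue T hTree T' hT'verts
end

section
/- A graph admitting a crossing-free proper 2-layer drawing is a forest: if G = (A ∪ B, E) is bipartite and there exist linear orders <₁ on A and <₂ on B such that no two edges cross (edges (a,b),(c,d) cross iff a <₁ c and d <₂ b, or c <₁ a and b <₂ d), then G contains no cycle. -/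
/-!
Let `a` be the vertex of `A` on a cycle that lies furthest right in the first layer. It has
two cycle neighbours `b₁ ≠ b₂`, say `b₁ <₂ b₂`. The other cycle neighbour `a'` of `b₂` lies
strictly left of `a`, so the edges `a b₁` and `a' b₂` cross.
-/

open SimpleGraph

lemma SimpleGraph.Walk.IsCycle.exists_adj_ne_of_mem_support {V : Type*} {G : SimpleGraph V}
    {u v : V} {p : G.Walk u u} (hp : p.IsCycle) (hv : v ∈ p.support) (x : V) :
    ∃ y ≠ x, G.Adj v y ∧ y ∈ p.support := by
  obtain ⟨y, hy, hyx⟩ := Set.exists_ne_of_one_lt_ncard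
    (by rw [hp.ncard_neighborSet_toSubgraph_eq_two hv]; norm_num) x
  exact ⟨y, hyx, p.toSubgraph.adj_sub hy,
    p.mem_verts_toSubgraph.mp (p.toSubgraph.edge_vert hy.symm)⟩

section Bipartite

variable {A B : Type*} {E : A → B → Prop} {G : SimpleGraph (A ⊕ B)}

lemma exists_eq_inr_of_adj_inl
    (hG : ∀ u v, G.Adj u v ↔
      (∃ a b, u = Sum.inl a ∧ v = Sum.inr b ∧ E a b) ∨
      (∃ a b, u = Sum.inr b ∧ v = Sum.inl a ∧ E a b))
    {a : A} {z : A ⊕ B} (h : G.Adj (Sum.inl a) z) : ∃ b, z = Sum.inr b ∧ E a b := by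
  simpa using (hG _ _).mp h

lemma exists_eq_inl_of_adj_inr
    (hG : ∀ u v, G.Adj u v ↔
      (∃ a b, u = Sum.inl a ∧ v = Sum.inr b ∧ E a b) ∨
      (∃ a b, u = Sum.inr b ∧ v = Sum.inl a ∧ E a b))
    {b : B} {z : A ⊕ B} (h : G.Adj (Sum.inr b) z) : ∃ a, z = Sum.inl a ∧ E a b := by
  simpa using (hG _ _).mp h

lemma not_lt_of_forall_le_of_isCycle
    (hG : ∀ u v, G.Adj u v ↔
      (∃ a b, u = Sum.inl a ∧ v = Sum.inr b ∧ E a b) ∨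
      (∃ a b, u = Sum.inr b ∧ v = Sum.inl a ∧ E a b))
    {f : A → ℝ} {g : B → ℝ} (hf : Function.Injective f)
    (hcf : ∀ a c b d, E a b → E c d → a ≠ c → b ≠ d →
      ¬((f a < f c ∧ g d < g b) ∨ (f c < f a ∧ g b < g d)))
    {v : A ⊕ B} {p : G.Walk v v} (hp : p.IsCycle) {a : A}
    (hmax : ∀ a', Sum.inl a' ∈ p.support → f a' ≤ f a)
    {b b' : B} (hab : E a b) (hb' : Sum.inr b' ∈ p.support) : ¬ g b < g b' := by
  intro hlt
  obtain ⟨z, hza, hz, hzs⟩ := hp.exists_adj_ne_of_mem_support hb' (Sum.inl a)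
  obtain ⟨a', rfl, ha'b'⟩ := exists_eq_inl_of_adj_inr hG hz
  have hne : a' ≠ a := fun h => hza (h ▸ rfl)
  exact hcf a' a b' b ha'b' hab hne (fun h => hlt.ne' (congrArg g h))
    (Or.inl ⟨(hmax a' hzs).lt_of_ne (hf.ne hne), hlt⟩)

end Bipartite

/-- A graph admitting a crossing-free proper 2-layer drawing is a forest: if `G`
is bipartite with parts `A`, `B` (all edges crossing the parts, given by the
relation `E`), and there are linear orders on `A` and on `B` (given by
injections `f`, `g` into `ℝ`) under which no two independent edges cross, then
`G` is acyclic. -/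
theorem stmt16 {A B : Type*} (E : A → B → Prop) (G : SimpleGraph (A ⊕ B))
    (hG : ∀ u v, G.Adj u v ↔
      (∃ a b, u = Sum.inl a ∧ v = Sum.inr b ∧ E a b) ∨
      (∃ a b, u = Sum.inr b ∧ v = Sum.inl a ∧ E a b))
    (f : A → ℝ) (g : B → ℝ)
    (hf : Function.Injective f) (hg : Function.Injective g)
    (hcf : ∀ a c b d, E a b → E c d → a ≠ c → b ≠ d →
      ¬((f a < f c ∧ g d < g b) ∨ (f c < f a ∧ g b < g d))) :
    G.IsAcyclic := by
  intro v p hp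
  obtain ⟨a₀, ha₀⟩ : ∃ a, Sum.inl a ∈ p.support := by
    obtain ⟨z, -, hz, hzs⟩ := hp.exists_adj_ne_of_mem_support p.start_mem_support v
    rcases v with a | b
    · exact ⟨a, p.start_mem_support⟩
    · obtain ⟨a, rfl, -⟩ := exists_eq_inl_of_adj_inr hG hz
      exact ⟨a, hzs⟩
  obtain ⟨a, ha, hmax⟩ := Set.exists_max_image {a | Sum.inl a ∈ p.support} f
    (p.support.finite_toSet.preimage Sum.inl_injective.injOn) ⟨a₀, ha₀⟩
  obtain ⟨x, -, hx, hxs⟩ := hp.exists_adj_ne_of_mem_support ha (Sum.inl a)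
  obtain ⟨b₁, rfl, hab₁⟩ := exists_eq_inr_of_adj_inl hG hx
  obtain ⟨y, hy₁, hy, hys⟩ := hp.exists_adj_ne_of_mem_support ha (Sum.inr b₁)
  obtain ⟨b₂, rfl, hab₂⟩ := exists_eq_inr_of_adj_inl hG hy
  have h₁₂ := not_lt_of_forall_le_of_isCycle hG hf hcf hp hmax hab₁ hys
  have h₂₁ := not_lt_of_forall_le_of_isCycle hG hf hcf hp hmax hab₂ hxs
  exact hy₁ (congrArg Sum.inr (hg (le_antisymm (not_lt.mp h₁₂) (not_lt.mp h₂₁))))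
end
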